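/- The symmetric simplicial complex construction is functorial: for every morphism of hypergraphs φ = (a, b) : H → H', the map S(φ) : S(H) → S(H') given by S(φ)({v}_v) = {a(v)}_{a(v)} and S(φ)(σ_e) = (a(σ))_{b(e)} if |a(σ)| ≥ 2, and S(φ)(σ_e) = {w}_w if a(σ) = {w} is a singleton, is well-defined (its values lie in S(H')), is monotone (x ≤ y in S(H) implies S(φ)(x) ≤ S(φ)(y) in S(H')), and satisfies dim(S(φ)(x)) ≤ dim(x) for all x; moreover S(id_H) = id_{S(H)} and S(ψ ∘ φ) = S(ψ) ∘ S(φ) for all composable hypergraph morphisms φ, ψ. -/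

import Mathlib

/-- A hypergraph `H = (V, E, f)`: finite vertex and edge sets together with a map assigning
to each hyperedge a nonempty set of vertices. -/
structure HGraph where
  V : Type
  E : Type
  [fintypeV : Fintype V]
  [fintypeE : Fintype E]
  [decEqV : DecidableEq V]
  [decEqE : DecidableEq E]
  f : E → Finset V
  nonempty : ∀ e, (f e).Nonempty

attribute [instance] HGraph.fintypeV HGraph.fintypeE
  HGraph.decEqV HGraph.decEqE

/-- The nested color domain of the hypergraph WL (HWL) test: a color at iteration `t+1` is
the previous color together with a multiset of previous colors of incident elements. -/
def HWLC : ℕ → Type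
  | 0 => Unit
  | t + 1 => HWLC t × Multiset (HWLC t)

/-- The HWL coloring of a hypergraph on the disjoint union `V ⊔ E`:
`d_{t+1}(v) = (d_t v, {{d_t e : v ∈ f e}})` and `d_{t+1}(e) = (d_t e, {{d_t v : v ∈ f e}})`. -/
noncomputable def hwl (H : HGraph) : (t : ℕ) → H.V ⊕ H.E → HWLC t
  | 0, _ => ()
  | t + 1, Sum.inl v =>
      (hwl H t (Sum.inl v),
       (Finset.univ.filter fun e => v ∈ H.f e).val.map fun e => hwl H t (Sum.inr e))
  | t + 1, Sum.inr e =>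
      (hwl H t (Sum.inr e), (H.f e).val.map fun v => hwl H t (Sum.inl v))

/-- The histogram of HWL colors over `V ⊔ E` at iteration `t`. -/
noncomputable def hwlHist (H : HGraph) (t : ℕ) : Multiset (HWLC t) :=
  Finset.univ.val.map (hwl H t)

/-- Two hypergraphs are HWL-equivalent if their HWL color histograms agree at every
iteration. -/
def HWLEquiv (H H' : HGraph) : Prop := ∀ t : ℕ, hwlHist H t = hwlHist H' t

/-- The strict order of the incidence poset `I(H)` on `V ⊔ E`: the only strict relations are
`v < e` for `v ∈ f e`. -/
def incLT (H : HGraph) : H.V ⊕ H.E → H.V ⊕ H.E → Prop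
  | Sum.inl v, Sum.inr e => v ∈ H.f e
  | _, _ => False

/-- The partial order of the incidence poset (the reflexive closure of `incLT`). -/
def incLE (H : HGraph) (x y : H.V ⊕ H.E) : Prop := x = y ∨ incLT H x y

/-- The dimension function of the incidence poset: `dim v = 0`, `dim e = 1`. -/
def incDim (H : HGraph) : H.V ⊕ H.E → ℕ
  | Sum.inl _ => 0
  | Sum.inr _ => 1

/-- The underlying set of the symmetric simplicial complex `S(H)`: pairs `({v}, v)` for
vertices `v` (written `{v}_v`) and pairs `(σ, e)` (written `σ_e`) with `σ ⊆ f e` of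
cardinality at least 2. -/
def SSC (H : HGraph) : Type :=
  {x : Finset H.V × (H.V ⊕ H.E) //
    (∃ v : H.V, x = ({v}, Sum.inl v)) ∨
    (∃ (σ : Finset H.V) (e : H.E), x = (σ, Sum.inr e) ∧ σ ⊆ H.f e ∧ 2 ≤ σ.card)}

noncomputable instance (H : HGraph) : Fintype (SSC H) := by
  classical
  unfold SSC
  exact Fintype.ofFinite _

/-- The strict order on `S(H)` : `{v}_v < σ_e` iff `v ∈ σ`, and `σ_e < τ_{e'}` iff `e = e'`
and `σ` is a proper subset of `τ`. -/
def sscLT (H : HGraph) (x y : SSC H) : Prop :=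
  (∃ (v : H.V) (σ : Finset H.V) (e : H.E),
      x.val = ({v}, Sum.inl v) ∧ y.val = (σ, Sum.inr e) ∧ v ∈ σ) ∨
  (∃ e : H.E, x.val.2 = Sum.inr e ∧ y.val.2 = Sum.inr e ∧ x.val.1 ⊂ y.val.1)

/-- The partial order on `S(H)` (the reflexive closure of `sscLT`). -/
def sscLE (H : HGraph) (x y : SSC H) : Prop := x = y ∨ sscLT H x y

/-- The dimension function on `S(H)`: `dim {v}_v = 0` and `dim σ_e = |σ| - 1`. -/
def sscDim {H : HGraph} (x : SSC H) : ℕ := x.val.1.card - 1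

/-- The map `S(φ) : S(H) → S(H')` induced by a hypergraph morphism `φ = (a, b)`:
`{v}_v ↦ {a v}_{a v}`; and `σ_e ↦ (a σ)_{b e}` if `|a σ| ≥ 2`, while `σ_e ↦ {w}_w` if
`a σ = {w}` is a singleton. -/
noncomputable def sscMap {H H' : HGraph} (a : H.V → H'.V) (b : H.E → H'.E)
    (hab : ∀ e : H.E, (H.f e).image a = H'.f (b e)) (x : SSC H) : SSC H' :=
  match hx : x.val.2 with
  | Sum.inl v => ⟨({a v}, Sum.inl (a v)), Or.inl ⟨a v, rfl⟩⟩
  | Sum.inr e =>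
    have key : x.val.1 ⊆ H.f e ∧ 2 ≤ x.val.1.card := by
      rcases x.property with ⟨v, hv⟩ | ⟨σ, e', hσ, hs, hc⟩
      · rw [hv] at hx; exact absurd hx (by simp)
      · have he : Sum.inr (α := H.V) e' = Sum.inr e := by rw [hσ] at hx; simpa using hx
        have he' : e' = e := by injection he
        have h1 : x.val.1 = σ := by rw [hσ]
        subst he'
        rw [h1]
        exact ⟨hs, hc⟩
    if h2 : 2 ≤ (x.val.1.image a).card then
      ⟨(x.val.1.image a, Sum.inr (b e)),
        Or.inr ⟨x.val.1.image a, b e, rfl, by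
          rw [← hab e]; exact Finset.image_subset_image key.1, h2⟩⟩
    else
      have hne : (x.val.1.image a).Nonempty :=
        Finset.image_nonempty.2 (Finset.card_pos.1 (by omega))
      ⟨({hne.choose}, Sum.inl hne.choose), Or.inl ⟨hne.choose, rfl⟩⟩

/-!
A cell of `S(H)` is determined by its vertex set `σ` together with, when `|σ| ≥ 2`, its
hyperedge. `S(φ)` acts on vertex sets as `Finset.image a`, and on hyperedges by `b` exactly when
the image still has at least two vertices. So every claim reduces to facts about images:
monotonicity and `|a σ| ≤ |σ|` give the order and dimension statements, `image_id` and
`image_image` functoriality.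
-/
namespace SSC

variable {H : HGraph}

lemma fst_nonempty (x : SSC H) : x.val.1.Nonempty := by
  rcases x.property with ⟨v, hx⟩ | ⟨σ, e, hx, -, hcard⟩ <;> rw [hx] <;> dsimp only
  · exact Finset.singleton_nonempty v
  · exact Finset.card_pos.1 (by omega)

lemma val_eq_of_fst_eq_singleton {x : SSC H} {w : H.V} (h : x.val.1 = {w}) :
    x.val = ({w}, Sum.inl w) := by
  rcases x.property with ⟨v, hx⟩ | ⟨σ, e, hx, -, hcard⟩ <;> rw [hx] at h ⊢ <;>
    dsimp only at h
  · rw [Finset.singleton_injective h]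
  · simp [h] at hcard

lemma val_eq_of_snd_eq_inl {x : SSC H} {v : H.V} (h : x.val.2 = Sum.inl v) :
    x.val = ({v}, Sum.inl v) := by
  rcases x.property with ⟨u, hx⟩ | ⟨σ, e, hx, -, -⟩ <;> rw [hx] at h ⊢ <;>
    dsimp only at h
  · rw [Sum.inl_injective h]
  · exact absurd h Sum.inr_ne_inl

lemma exists_fst_eq_singleton {x : SSC H} (h : x.val.1.card < 2) : ∃ v, x.val.1 = {v} :=
  Finset.card_eq_one.1 (le_antisymm (by omega) (Finset.card_pos.2 x.fst_nonempty))

lemma ext_of_fst {x y : SSC H} (h₁ : x.val.1 = y.val.1)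
    (h₂ : 2 ≤ x.val.1.card → x.val.2 = y.val.2) : x = y := by
  by_cases hcard : 2 ≤ x.val.1.card
  · exact Subtype.ext (Prod.ext h₁ (h₂ hcard))
  · obtain ⟨w, hw⟩ := exists_fst_eq_singleton (not_le.1 hcard)
    exact Subtype.ext ((val_eq_of_fst_eq_singleton hw).trans
      (val_eq_of_fst_eq_singleton (h₁ ▸ hw)).symm)

end SSC

lemma sscLE_iff {H : HGraph} {x y : SSC H} :
    sscLE H x y ↔ x.val.1 ⊆ y.val.1 ∧ (x.val.1.card < 2 ∨ x.val.2 = y.val.2) := by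
  constructor
  · rintro (rfl | ⟨v, σ, e, hx, hy, hv⟩ | ⟨e, hx, hy, hss⟩)
    · exact ⟨subset_rfl, Or.inr rfl⟩
    · rw [hx, hy]
      exact ⟨Finset.singleton_subset_iff.2 hv, Or.inl (by simp)⟩
    · exact ⟨hss.subset, Or.inr (hx.trans hy.symm)⟩
  · rintro ⟨hsub, hcard | hsnd⟩
    · obtain ⟨v, hv⟩ := SSC.exists_fst_eq_singleton hcard
      have hvy : v ∈ y.val.1 := hsub (hv ▸ Finset.mem_singleton_self v)
      rcases y.property with ⟨u, hy⟩ | ⟨σ, e, hy, -, -⟩ <;> rw [hy] at hvy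
      · refine Or.inl (Subtype.ext ?_)
        rw [SSC.val_eq_of_fst_eq_singleton hv, hy, Finset.mem_singleton.1 hvy]
      · exact Or.inr (Or.inl ⟨v, σ, e, SSC.val_eq_of_fst_eq_singleton hv, hy, hvy⟩)
    · by_cases heq : x.val.1 = y.val.1
      · exact Or.inl (Subtype.ext (Prod.ext heq hsnd))
      rcases x.property with ⟨v, hx⟩ | ⟨σ, e, hx, -, -⟩
      · have hy := SSC.val_eq_of_snd_eq_inl (hsnd.symm.trans (congrArg Prod.snd hx))
        exact absurd ((congrArg Prod.fst hx).trans (congrArg Prod.fst hy).symm) heq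
      · exact Or.inr (Or.inr ⟨e, congrArg Prod.snd hx, hsnd.symm.trans (congrArg Prod.snd hx),
          Finset.ssubset_iff_subset_ne.2 ⟨hsub, heq⟩⟩)

section sscMap

variable {H H' : HGraph} (a : H.V → H'.V) (b : H.E → H'.E)
  (hab : ∀ e : H.E, (H.f e).image a = H'.f (b e))

lemma sscMap_val_fst (x : SSC H) : (sscMap a b hab x).val.1 = x.val.1.image a := by
  unfold sscMap
  split
  · next v hx => rw [SSC.val_eq_of_snd_eq_inl hx, Finset.image_singleton]
  · next e hx =>
    dsimp only
    by_cases h2 : 2 ≤ (x.val.1.image a).card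
    · exact congrArg (fun y : SSC H' => y.val.1) (dif_pos h2)
    · refine (congrArg (fun y : SSC H' => y.val.1) (dif_neg h2)).trans ?_
      generalize_proofs hne
      exact Finset.eq_of_subset_of_card_le (Finset.singleton_subset_iff.2 hne.choose_spec)
        (by rw [Finset.card_singleton]; omega)

lemma sscMap_val_snd_of_two_le_card (x : SSC H) (h : 2 ≤ (x.val.1.image a).card) :
    (sscMap a b hab x).val.2 = Sum.map a b x.val.2 := by
  unfold sscMap
  split
  · next v hx => simp [SSC.val_eq_of_snd_eq_inl hx] at h
  · next e hx =>
    dsimp only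
    exact (congrArg (fun y : SSC H' => y.val.2) (dif_pos h)).trans
      (congrArg (Sum.map a b) hx).symm

lemma sscMap_val_of_val_eq_inl {x : SSC H} {v : H.V} (h : x.val = ({v}, Sum.inl v)) :
    (sscMap a b hab x).val = ({a v}, Sum.inl (a v)) :=
  SSC.val_eq_of_fst_eq_singleton (by rw [sscMap_val_fst, h, Finset.image_singleton])

lemma sscMap_val_of_val_eq_inr {x : SSC H} {σ : Finset H.V} {e : H.E}
    (h : x.val = (σ, Sum.inr e)) (h2 : 2 ≤ (σ.image a).card) :
    (sscMap a b hab x).val = (σ.image a, Sum.inr (b e)) := by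
  refine Prod.ext (by rw [sscMap_val_fst, h]) ?_
  rw [sscMap_val_snd_of_two_le_card a b hab x (by rwa [h]), h]
  rfl

lemma sscMap_val_of_image_eq_singleton {x : SSC H} {w : H'.V} (h : x.val.1.image a = {w}) :
    (sscMap a b hab x).val = ({w}, Sum.inl w) :=
  SSC.val_eq_of_fst_eq_singleton ((sscMap_val_fst a b hab x).trans h)

lemma sscMap_mono {x y : SSC H} (hxy : sscLE H x y) :
    sscLE H' (sscMap a b hab x) (sscMap a b hab y) := by
  obtain ⟨hsub, hsnd⟩ := sscLE_iff.1 hxy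
  rw [sscLE_iff, sscMap_val_fst, sscMap_val_fst]
  refine ⟨Finset.image_subset_image hsub, or_iff_not_imp_left.2 fun hx => ?_⟩
  have hx2 : 2 ≤ (x.val.1.image a).card := by omega
  have hy2 : 2 ≤ (y.val.1.image a).card :=
    hx2.trans (Finset.card_le_card (Finset.image_subset_image hsub))
  have hsnd' : x.val.2 = y.val.2 :=
    hsnd.resolve_left (not_lt.2 (hx2.trans Finset.card_image_le))
  rw [sscMap_val_snd_of_two_le_card a b hab x hx2, sscMap_val_snd_of_two_le_card a b hab y hy2,
    hsnd']

lemma sscDim_sscMap_le (x : SSC H) : sscDim (sscMap a b hab x) ≤ sscDim x := by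
  unfold sscDim
  rw [sscMap_val_fst]
  exact Nat.sub_le_sub_right Finset.card_image_le 1

lemma sscMap_comp {H'' : HGraph} (a' : H'.V → H''.V) (b' : H'.E → H''.E)
    (hab' : ∀ e : H'.E, (H'.f e).image a' = H''.f (b' e))
    (hcomp : ∀ e : H.E, (H.f e).image (a' ∘ a) = H''.f (b' (b e))) :
    sscMap (a' ∘ a) (fun e => b' (b e)) hcomp = sscMap a' b' hab' ∘ sscMap a b hab := by
  funext x
  refine SSC.ext_of_fst ?_ fun h => ?_
  · simp only [Function.comp_apply, sscMap_val_fst, Finset.image_image]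
  · rw [sscMap_val_fst] at h
    have h' : 2 ≤ (x.val.1.image a).card :=
      h.trans (by rw [← Finset.image_image]; exact Finset.card_image_le)
    rw [sscMap_val_snd_of_two_le_card (a' ∘ a) _ hcomp x h, Function.comp_apply,
      sscMap_val_snd_of_two_le_card a' b' hab' _ (by rwa [sscMap_val_fst, Finset.image_image]),
      sscMap_val_snd_of_two_le_card a b hab x h', Sum.map_map]
    rfl

end sscMap

lemma sscMap_id {H : HGraph} (hid : ∀ e : H.E, (H.f e).image id = H.f (id e)) :
    sscMap id id hid = id := by
  funext x
  refine SSC.ext_of_fst (by rw [sscMap_val_fst, Finset.image_id]; rfl) fun h => ?_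
  rw [sscMap_val_fst, Finset.image_id] at h
  rw [sscMap_val_snd_of_two_le_card id id hid x (by rwa [Finset.image_id]), Sum.map_id_id]
  rfl

/-- The symmetric simplicial complex construction is functorial: for every
hypergraph morphism `(a, b) : H → H'`, the induced map `S(φ)` takes the stated values
(well-definedness), is monotone, and decreases dimension; moreover it sends identities to
identities and compositions to compositions. -/
theorem symmetric_simplicial_complex_functorial :
    (∀ (H H' : HGraph) (a : H.V → H'.V) (b : H.E → H'.E)
        (hab : ∀ e : H.E, (H.f e).image a = H'.f (b e)),
        -- values on vertices
        (∀ (x : SSC H) (v : H.V), x.val = ({v}, Sum.inl v) →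
            (sscMap a b hab x).val = ({a v}, Sum.inl (a v))) ∧
        -- values on simplices with non-degenerate image
        (∀ (x : SSC H) (σ : Finset H.V) (e : H.E), x.val = (σ, Sum.inr e) →
            2 ≤ (σ.image a).card →
            (sscMap a b hab x).val = (σ.image a, Sum.inr (b e))) ∧
        -- values on simplices with singleton image
        (∀ (x : SSC H) (σ : Finset H.V) (e : H.E) (w : H'.V), x.val = (σ, Sum.inr e) →
            σ.image a = {w} →
            (sscMap a b hab x).val = ({w}, Sum.inl w)) ∧
        -- monotone
        (∀ x y : SSC H, sscLE H x y → sscLE H' (sscMap a b hab x) (sscMap a b hab y)) ∧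
        -- dimension non-increasing
        (∀ x : SSC H, sscDim (sscMap a b hab x) ≤ sscDim x)) ∧
    -- identity
    (∀ (H : HGraph) (hid : ∀ e : H.E, (H.f e).image id = H.f (id e)),
        sscMap id id hid = id) ∧
    -- composition
    (∀ (H H' H'' : HGraph) (a : H.V → H'.V) (b : H.E → H'.E)
        (a' : H'.V → H''.V) (b' : H'.E → H''.E)
        (hab : ∀ e : H.E, (H.f e).image a = H'.f (b e))
        (hab' : ∀ e : H'.E, (H'.f e).image a' = H''.f (b' e))
        (hcomp : ∀ e : H.E, (H.f e).image (a' ∘ a) = H''.f (b' (b e))),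
        sscMap (a' ∘ a) (fun e => b' (b e)) hcomp = sscMap a' b' hab' ∘ sscMap a b hab) := by
  refine ⟨fun H H' a b hab => ⟨?_, ?_, ?_, ?_, sscDim_sscMap_le a b hab⟩,
    fun H hid => sscMap_id hid,
    fun H H' H'' a b a' b' hab hab' hcomp => sscMap_comp a b hab a' b' hab' hcomp⟩
  · exact fun x v => sscMap_val_of_val_eq_inl a b hab
  · exact fun x σ e => sscMap_val_of_val_eq_inr a b hab
  · intro x σ e w hx hw
    exact sscMap_val_of_image_eq_singleton a b hab (by rw [hx]; exact hw)
  · exact fun x y => sscMap_mono a b hab
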